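/- arXiv:1305.5880 — 2 statements merged into one kernel-verified Lean document; each statement's English description precedes it below -/
import Mathlib

section
/- Every weighted quasi-metric space (X,q,w) arises as the graph construction over a metric space with a 1-Lipschitz function: taking ρ to be the symmetrization of q and f := w/2, f is 1-Lipschitz with respect to ρ and q(x,y) = ρ(x,y) + f(y) - f(x) for all x,y ∈ X. -/
theorem weighted_quasi_metric_is_graph_general {X : Type*} (q : X → X → ℝ) (w : X → ℝ)
    (hq_nonneg : ∀ x y, 0 ≤ q x y)
    (hw : ∀ x y, q x y + w x = q y x + w y) :
    (∀ x y, |w x / 2 - w y / 2| ≤ (q x y + q y x) / 2) ∧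
    (∀ x y, q x y = (q x y + q y x) / 2 + (w y / 2 - w x / 2)) := by
  refine ⟨fun x y => abs_le.2 ⟨?_, ?_⟩, fun x y => ?_⟩ <;>
    linarith [hw x y, hq_nonneg x y, hq_nonneg y x]

/-- Every weighted quasi-metric space `(X,q,w)` arises from the graph
construction: with `ρ` the symmetrization of `q` and `f := w/2`, `f` is
1-Lipschitz for `ρ` and `q(x,y) = ρ(x,y) + f(y) - f(x)`. -/
theorem weighted_quasi_metric_is_graph {X : Type*} (q : X → X → ℝ) (w : X → ℝ)
    (hq_nonneg : ∀ x y, 0 ≤ q x y)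
    (hq_refl : ∀ x, q x x = 0)
    (hq_pos : ∀ x y, x ≠ y → 0 < q x y)
    (hq_tri : ∀ x y z, q x y ≤ q x z + q z y)
    (hw_nonneg : ∀ x, 0 ≤ w x)
    (hw : ∀ x y, q x y + w x = q y x + w y) :
    (∀ x y, |w x / 2 - w y / 2| ≤ (q x y + q y x) / 2) ∧
    (∀ x y, q x y = (q x y + q y x) / 2 + (w y / 2 - w x / 2)) :=
  weighted_quasi_metric_is_graph_general q w hq_nonneg hw
end

section
/- Let (M,q) be a quasi-metric space, X := M × [0,∞) with δ((x,ξ),(y,η)) := max{q(x,y),q(y,x)} + |ξ-η|, and E(z) := {(y,η) ∈ X : q(y,z) ≤ η}. Then the map E is an isometry onto its image with respect to the forward Hausdorff distance: for all x,y ∈ M, q(x,y) = sup_{a ∈ E(x)} inf_{b ∈ E(y)} δ(a,b). In particular E is injective. -/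
/-!
Lifting a point `z` to `(z, 0)` and a point `(w, η)` of `E y` to the same base point `w` at
height `max ζ (q w y)` shows both inequalities: from `(x, 0)` every point of `E y` is at
distance at least `q x w + q w y ≥ q x y`, while from any `(w, ζ) ∈ E x` the point
`(w, max ζ (q w y)) ∈ E y` is at distance at most `q w y - q w x ≤ q x y`.
-/

namespace QuasiMetric

variable {M : Type*} {q : M → M → ℝ}

/-- The epigraph `E(z)` of `q(·, z)` inside `M × [0, ∞)`. -/
def epigraph (q : M → M → ℝ) (z : M) : Set (M × {ξ : ℝ // 0 ≤ ξ}) :=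
  {p | q p.1 z ≤ p.2.1}

/-- The symmetrised distance `δ` on `M × [0, ∞)`. -/
def liftDist (q : M → M → ℝ) (u v : M × {ξ : ℝ // 0 ≤ ξ}) : ℝ :=
  max (q u.1 v.1) (q v.1 u.1) + |u.2.1 - v.2.1|

theorem nonneg_of_pos (hq_refl : ∀ x, q x x = 0) (hq_pos : ∀ x y, x ≠ y → 0 < q x y)
    (x y : M) : 0 ≤ q x y := by
  rcases eq_or_ne x y with rfl | hxy
  · exact (hq_refl x).ge
  · exact (hq_pos x y hxy).le

theorem mk_zero_mem_epigraph (hq_refl : ∀ x, q x x = 0) (z : M) :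
    (z, ⟨0, le_rfl⟩) ∈ epigraph q z :=
  (hq_refl z).le

theorem liftDist_nonneg (hq_nonneg : ∀ x y, 0 ≤ q x y) (u v : M × {ξ : ℝ // 0 ≤ ξ}) :
    0 ≤ liftDist q u v :=
  add_nonneg ((hq_nonneg _ _).trans (le_max_left _ _)) (abs_nonneg _)

theorem le_liftDist_of_mem_epigraph (hq_tri : ∀ x y z, q x y ≤ q x z + q z y) {y : M}
    {b : M × {ξ : ℝ // 0 ≤ ξ}} (hb : b ∈ epigraph q y) (x : M) :
    q x y ≤ liftDist q (x, ⟨0, le_rfl⟩) b := by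
  have hη : |0 - b.2.1| = b.2.1 := by rw [zero_sub, abs_neg, abs_of_nonneg b.2.2]
  calc q x y ≤ q x b.1 + q b.1 y := hq_tri x y b.1
    _ ≤ max (q x b.1) (q b.1 x) + b.2.1 := add_le_add (le_max_left _ _) hb
    _ = liftDist q (x, ⟨0, le_rfl⟩) b := by rw [liftDist, hη]

theorem exists_mem_epigraph_liftDist_le (hq_nonneg : ∀ x y, 0 ≤ q x y)
    (hq_refl : ∀ x, q x x = 0) (hq_tri : ∀ x y z, q x y ≤ q x z + q z y) {x : M} {a : M × {ξ : ℝ // 0 ≤ ξ}}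
    (ha : a ∈ epigraph q x) (y : M) :
    ∃ b ∈ epigraph q y, liftDist q a b ≤ q x y := by
  obtain ⟨w, ζ, hζ⟩ := a
  refine ⟨(w, ⟨max ζ (q w y), hζ.trans (le_max_left _ _)⟩),
    show q w y ≤ max ζ (q w y) from le_max_right _ _, ?_⟩
  have hwy : q w y ≤ ζ + q x y := (hq_tri w y x).trans (add_le_add_left ha _)
  rw [liftDist, hq_refl, max_self, zero_add, abs_sub_comm,
    abs_of_nonneg (sub_nonneg.mpr (le_max_left _ _)), sub_le_iff_le_add']
  exact max_le (le_add_of_nonneg_right (hq_nonneg x y)) hwy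

theorem iSup_iInf_liftDist_epigraph (hq_nonneg : ∀ x y, 0 ≤ q x y)
    (hq_refl : ∀ x, q x x = 0) (hq_tri : ∀ x y z, q x y ≤ q x z + q z y) (x y : M) :
    q x y = ⨆ a : epigraph q x, ⨅ b : epigraph q y, liftDist q a b := by
  have (z : M) : Nonempty (epigraph q z) := ⟨⟨_, mk_zero_mem_epigraph hq_refl z⟩⟩
  have hinf_le (a : epigraph q x) : ⨅ b : epigraph q y, liftDist q a b ≤ q x y := by
    obtain ⟨b, hb, hab⟩ := exists_mem_epigraph_liftDist_le hq_nonneg hq_refl hq_tri a.2 y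
    refine (ciInf_le ⟨0, ?_⟩ (⟨b, hb⟩ : epigraph q y)).trans hab
    rintro _ ⟨b', rfl⟩
    exact liftDist_nonneg hq_nonneg _ _
  refine le_antisymm ?_ (ciSup_le hinf_le)
  refine le_ciSup_of_le ⟨q x y, ?_⟩ (⟨_, mk_zero_mem_epigraph hq_refl x⟩ : epigraph q x) ?_
  · rintro _ ⟨a, rfl⟩
    exact hinf_le a
  · exact le_ciInf fun b => le_liftDist_of_mem_epigraph hq_tri b.2 x

theorem epigraph_injective (hq_refl : ∀ x, q x x = 0) (hq_pos : ∀ x y, x ≠ y → 0 < q x y) :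
    Function.Injective (epigraph q) := by
  intro x y hxy
  by_contra hne
  have hx : _ ∈ epigraph q y := hxy ▸ mk_zero_mem_epigraph hq_refl x
  exact (hq_pos x y hne).not_ge hx

end QuasiMetric

open QuasiMetric in
theorem E_forward_Hausdorff_isometry_general {M : Type*} (q : M → M → ℝ)
    (hq_refl : ∀ x, q x x = 0)
    (hq_pos : ∀ x y, x ≠ y → 0 < q x y)
    (hq_tri : ∀ x y z, q x y ≤ q x z + q z y) :
    let X := M × {ξ : ℝ // 0 ≤ ξ}
    let δ : X → X → ℝ := fun u v => max (q u.1 v.1) (q v.1 u.1) + |u.2.1 - v.2.1|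
    let E : M → Set X := fun z => {p | q p.1 z ≤ p.2.1}
    (∀ x y, q x y = ⨆ a : E x, ⨅ b : E y, δ a b) ∧ Function.Injective E :=
  ⟨iSup_iInf_liftDist_epigraph (nonneg_of_pos hq_refl hq_pos) hq_refl hq_tri,
    epigraph_injective hq_refl hq_pos⟩

/-- The map `E(z) := {(y,η) : q(y,z) ≤ η}` is an isometry of `(M,q)` onto its
image with respect to the forward Hausdorff distance:
`q(x,y) = sup_{a ∈ E(x)} inf_{b ∈ E(y)} δ(a,b)`; in particular `E` is injective. -/
theorem E_forward_Hausdorff_isometry {M : Type*} (q : M → M → ℝ)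
    (hq_nonneg : ∀ x y, 0 ≤ q x y)
    (hq_refl : ∀ x, q x x = 0)
    (hq_pos : ∀ x y, x ≠ y → 0 < q x y)
    (hq_tri : ∀ x y z, q x y ≤ q x z + q z y) :
    let X := M × {ξ : ℝ // 0 ≤ ξ}
    let δ : X → X → ℝ := fun u v => max (q u.1 v.1) (q v.1 u.1) + |u.2.1 - v.2.1|
    let E : M → Set X := fun z => {p | q p.1 z ≤ p.2.1}
    (∀ x y, q x y = ⨆ a : E x, ⨅ b : E y, δ a b) ∧ Function.Injective E :=
  E_forward_Hausdorff_isometry_general q hq_refl hq_pos hq_tri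
end
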